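/- For every interval I ⊂ ℝ there exists a unique interval Ĩ belonging to one of the three shifted dyadic grids 𝒟_j = {2^k[0,1) + (n + j/3)2^k : k,n ∈ ℤ}, j = 0,1,2, such that 3I ⊂ Ĩ, |Ĩ| ≤ 18|I|, and the center of Ĩ is least possible among such intervals. -/
import Mathlib

/-- The interval of the `j`-th shifted dyadic grid `𝒟_j = {2^k[0,1) + (n + j/3)2^k}`. -/
noncomputable def sdyad (j : Fin 3) (k n : ℤ) : Set ℝ :=
  Set.Ico (((n : ℝ) + (j : ℕ) / 3) * 2 ^ k) (((n : ℝ) + 1 + (j : ℕ) / 3) * 2 ^ k)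

/-- The center of the interval `sdyad j k n`. -/
noncomputable def sdyadCenter (j : Fin 3) (k n : ℤ) : ℝ :=
  ((n : ℝ) + 1/2 + (j : ℕ) / 3) * 2 ^ k

lemma odd_pow_eq {A B k k' : ℤ} (hk : k ≤ k') (hA : Odd A) (hB : Odd B)
    (h : (A:ℝ) * 2 ^ k = (B:ℝ) * 2 ^ k') : A = B ∧ k = k' := by
  have hpk : ((2:ℝ) ^ k) ≠ 0 := (zpow_pos (by norm_num) k).ne'
  have e1 : (2:ℝ) ^ k' = 2 ^ (k' - k) * 2 ^ k := by
    rw [← zpow_add₀ (by norm_num : (2:ℝ) ≠ 0)]; ring_nf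
  rw [e1, ← mul_assoc] at h
  have h2 : (A:ℝ) = (B:ℝ) * 2 ^ (k' - k) := mul_right_cancel₀ hpk h
  obtain ⟨d, hd⟩ : ∃ d : ℕ, k' - k = d := ⟨(k'-k).toNat, (Int.toNat_of_nonneg (by omega)).symm⟩
  rw [hd, zpow_natCast] at h2
  have h3 : A = B * 2 ^ d := by exact_mod_cast h2
  cases d with
  | zero =>
    simp at h3
    exact ⟨h3, by omega⟩
  | succ e =>
    exfalso
    have hev : Even ((2:ℤ) ^ (e+1)) := by rw [pow_succ]; exact (even_two).mul_left _
    have : Even A := by rw [h3]; exact hev.mul_left B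
    exact (Int.not_odd_iff_even.mpr this) hA

lemma sdyadCenter_inj {j j' : Fin 3} {k k' n n' : ℤ}
    (h : sdyadCenter j k n = sdyadCenter j' k' n') : j = j' ∧ k = k' ∧ n = n' := by
  unfold sdyadCenter at h
  have H : ((6*n+3+2*((j:ℕ):ℤ) : ℤ):ℝ) * 2 ^ k = ((6*n'+3+2*((j':ℕ):ℤ) : ℤ):ℝ) * 2 ^ k' := by
    push_cast
    linear_combination (6:ℝ) * h
  have hA : Odd (6*n+3+2*((j:ℕ):ℤ)) := ⟨3*n+1+(j:ℕ), by ring⟩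
  have hB : Odd (6*n'+3+2*((j':ℕ):ℤ)) := ⟨3*n'+1+(j':ℕ), by ring⟩
  have hj : (j:ℕ) < 3 := j.isLt
  have hj' : (j':ℕ) < 3 := j'.isLt
  rcases le_total k k' with hk | hk
  · obtain ⟨e1, e2⟩ := odd_pow_eq hk hA hB H
    refine ⟨Fin.ext ?_, e2, ?_⟩ <;> omega
  · obtain ⟨e1, e2⟩ := odd_pow_eq hk hB hA H.symm
    refine ⟨Fin.ext ?_, e2.symm, ?_⟩ <;> omega

/-- For every interval `I = [a,b]` there is a unique interval `Ĩ` in one of the three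
shifted dyadic grids with `3I ⊆ Ĩ`, `|Ĩ| ≤ 18|I|` and center least possible. -/
theorem stmt6 (a b : ℝ) (hab : a < b) :
    ∃! t : Fin 3 × ℤ × ℤ,
      (Set.Icc (a - (b - a)) (b + (b - a)) ⊆ sdyad t.1 t.2.1 t.2.2 ∧
        (2 : ℝ) ^ t.2.1 ≤ 18 * (b - a)) ∧
      ∀ s : Fin 3 × ℤ × ℤ,
        (Set.Icc (a - (b - a)) (b + (b - a)) ⊆ sdyad s.1 s.2.1 s.2.2 ∧
          (2 : ℝ) ^ s.2.1 ≤ 18 * (b - a)) →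
        sdyadCenter t.1 t.2.1 t.2.2 ≤ sdyadCenter s.1 s.2.1 s.2.2 := by
  have hL : 0 < b - a := by linarith
  set c : ℝ := a - (b - a) with hc
  set d : ℝ := b + (b - a) with hd
  have hdc : d = c + 3 * (b - a) := by rw [hc, hd]; ring
  have hcd : c ≤ d := by linarith
  set P : Fin 3 × ℤ × ℤ → Prop := fun s =>
    Set.Icc c d ⊆ sdyad s.1 s.2.1 s.2.2 ∧ (2 : ℝ) ^ s.2.1 ≤ 18 * (b - a) with hP
  -- basic facts from P
  have key : ∀ s : Fin 3 × ℤ × ℤ, P s →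
      ((s.2.2:ℝ) + ((s.1:ℕ):ℝ)/3) * 2 ^ s.2.1 ≤ c ∧ d < ((s.2.2:ℝ) + 1 + ((s.1:ℕ):ℝ)/3) * 2 ^ s.2.1 := by
    rintro ⟨j, k, n⟩ ⟨hsub, _⟩
    have h1 := hsub (Set.left_mem_Icc.mpr hcd)
    have h2 := hsub (Set.right_mem_Icc.mpr hcd)
    exact ⟨h1.1, h2.2⟩
  -- finiteness of the set of candidates
  have two_cast : ((2:ℕ):ℝ) = (2:ℝ) := by norm_num
  have hSfin : {s : Fin 3 × ℤ × ℤ | P s}.Finite := by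
    set N : ℤ := ⌈|c| / (3 * (b-a))⌉ with hN
    apply Set.Finite.subset
      ((Set.finite_univ (α := Fin 3)).prod
        ((Set.finite_Icc (Int.log 2 (3*(b-a))) (Int.log 2 (18*(b-a)))).prod
          (Set.finite_Icc (-N-2) N)))
    rintro ⟨j, k, n⟩ hs
    obtain ⟨hlow, hhigh⟩ := key _ hs
    obtain ⟨_, hsize⟩ := hs
    have hpow : (0:ℝ) < 2 ^ k := zpow_pos (by norm_num) k
    have hj0 : (0:ℝ) ≤ ((j:ℕ):ℝ) := Nat.cast_nonneg _
    have hj2 : ((j:ℕ):ℝ) ≤ 2 := by exact_mod_cast Nat.le_of_lt_succ j.isLt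
    have h3L : 3 * (b - a) < 2 ^ k := by nlinarith
    refine ⟨Set.mem_univ _, ⟨?_, ?_⟩, ?_, ?_⟩
    · -- Int.log 2 (3(b-a)) ≤ k
      have := (Int.lt_zpow_iff_log_lt (b := 2) (by norm_num) (by linarith : (0:ℝ) < 3*(b-a))).mp
        (by rw [two_cast]; exact h3L)
      exact this.le
    · -- k ≤ Int.log 2 (18(b-a))
      exact (Int.zpow_le_iff_le_log (b := 2) (by norm_num) (by linarith : (0:ℝ) < 18*(b-a))).mp
        (by rw [two_cast]; exact hsize)
    · -- -N-2 ≤ n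
      have h1 : ((n:ℝ) + 2) * 2 ^ k > -|c| := by nlinarith [neg_abs_le c]
      have h2 : -|c| / (3*(b-a)) ≤ -|c| / 2 ^ k := by
        rw [div_le_div_iff₀ (by linarith) hpow]
        nlinarith [abs_nonneg c]
      have h3 : -|c| / 2 ^ k < (n:ℝ) + 2 := by rw [div_lt_iff₀ hpow]; nlinarith
      have h4 : -((N:ℝ)) ≤ -|c| / (3*(b-a)) := by
        rw [neg_div]
        exact neg_le_neg (Int.le_ceil _)
      have : ((-N-2 : ℤ):ℝ) < (n:ℝ) := by push_cast; linarith
      exact_mod_cast this.le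
    · -- n ≤ N
      have h1 : (n:ℝ) * 2 ^ k ≤ c := by nlinarith
      have h2 : (n:ℝ) ≤ |c| / 2 ^ k := by
        rw [le_div_iff₀ hpow]; nlinarith [le_abs_self c]
      have h3 : |c| / 2 ^ k ≤ |c| / (3*(b-a)) := by
        apply div_le_div_of_nonneg_left (abs_nonneg c) (by linarith) h3L.le
      have : (n:ℝ) ≤ (N:ℝ) := le_trans h2 (le_trans h3 (Int.le_ceil _))
      exact_mod_cast this
  -- nonemptiness
  have hSne : ∃ s, P s := by
    set k : ℤ := Int.log 2 (9*(b-a)) + 1 with hk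
    have hpow : (0:ℝ) < 2 ^ k := zpow_pos (by norm_num) k
    have hk1 : 9*(b-a) < 2 ^ k := by
      have := Int.lt_zpow_succ_log_self (b := 2) (by norm_num) (9*(b-a)) (R := ℝ)
      rwa [two_cast] at this
    have hk2 : 2 ^ k ≤ 18*(b-a) := by
      have h1 : ((2:ℝ)) ^ Int.log 2 (9*(b-a)) ≤ 9*(b-a) := by
        have := Int.zpow_log_le_self (b := 2) (by norm_num) (by linarith : (0:ℝ) < 9*(b-a))
        rwa [two_cast] at this
      have : (2:ℝ) ^ k = 2 * 2 ^ Int.log 2 (9*(b-a)) := by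
        rw [hk, zpow_add₀ (by norm_num : (2:ℝ) ≠ 0)]; ring
      rw [this]; linarith
    set t0 : ℤ := ⌊3 * c / 2 ^ k⌋ with ht0
    have hmod0 : 0 ≤ t0 % 3 := Int.emod_nonneg t0 (by norm_num)
    have hmod3 : t0 % 3 < 3 := Int.emod_lt_of_pos t0 (by norm_num)
    refine ⟨⟨⟨(t0 % 3).toNat, by omega⟩, k, t0 / 3⟩, ?_, hk2⟩
    have hjcast : ((((t0 % 3).toNat : ℕ)):ℝ) = ((t0 % 3 : ℤ):ℝ) := by
      have h := Int.toNat_of_nonneg hmod0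
      exact_mod_cast congrArg (fun z : ℤ => (z:ℝ)) h
    have hsplit : 3 * ((t0/3 : ℤ):ℝ) + ((t0 % 3 : ℤ):ℝ) = (t0:ℝ) := by
      exact_mod_cast Int.mul_ediv_add_emod t0 3
    have hfl : (t0:ℝ) * 2 ^ k ≤ 3 * c := by
      have := Int.floor_le (3 * c / 2 ^ k)
      rw [le_div_iff₀ hpow] at this
      exact this
    have hfu : 3 * c < ((t0:ℝ) + 1) * 2 ^ k := by
      have := Int.lt_floor_add_one (3 * c / 2 ^ k)
      rw [div_lt_iff₀ hpow] at this
      push_cast at this ⊢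
      linarith
    intro x hx
    obtain ⟨hx1, hx2⟩ := hx
    constructor
    · show (((t0/3 : ℤ):ℝ) + (((t0 % 3).toNat : ℕ):ℝ)/3) * 2 ^ k ≤ x
      rw [hjcast]
      have : (((t0/3 : ℤ):ℝ) + ((t0 % 3 : ℤ):ℝ)/3) * 2 ^ k = (t0:ℝ) * 2 ^ k / 3 := by
        linear_combination ((2:ℝ) ^ k / 3) * hsplit
      rw [this]
      linarith
    · show x < (((t0/3 : ℤ):ℝ) + 1 + (((t0 % 3).toNat : ℕ):ℝ)/3) * 2 ^ k
      rw [hjcast]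
      have : (((t0/3 : ℤ):ℝ) + 1 + ((t0 % 3 : ℤ):ℝ)/3) * 2 ^ k = ((t0:ℝ) + 3) * 2 ^ k / 3 := by
        linear_combination ((2:ℝ) ^ k / 3) * hsplit
      rw [this]
      have hxd : x ≤ d := hx2
      rw [hdc] at hxd
      linarith
  -- extract minimum
  obtain ⟨s0, hs0⟩ := hSne
  obtain ⟨t, htS, htmin⟩ := Set.exists_min_image {s : Fin 3 × ℤ × ℤ | P s}
    (fun s => sdyadCenter s.1 s.2.1 s.2.2) hSfin ⟨s0, hs0⟩
  refine ⟨t, ⟨htS, fun s hs => htmin s hs⟩, ?_⟩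
  rintro y ⟨hyP, hymin⟩
  have h1 : sdyadCenter y.1 y.2.1 y.2.2 ≤ sdyadCenter t.1 t.2.1 t.2.2 := hymin t htS
  have h2 : sdyadCenter t.1 t.2.1 t.2.2 ≤ sdyadCenter y.1 y.2.1 y.2.2 := htmin y hyP
  have heq := le_antisymm h1 h2
  obtain ⟨jy, ky, ny⟩ := y
  obtain ⟨jt, kt, nt⟩ := t
  obtain ⟨e1, e2, e3⟩ := sdyadCenter_inj heq
  simp only [Prod.mk.injEq]
  exact ⟨e1, e2, e3⟩
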